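/- arXiv:2509.02058 — 5 statements merged into one kernel-verified Lean document; each statement's English description precedes it below -/
import Mathlib

section
/- Let M be a positive integer and let A and C be M×M complex matrices with A symmetric (Aᵀ = A). Then the following identity of 2M×2M block matrices holds: exp(fromBlocks 0 0 A 0) * exp(fromBlocks C 0 0 (−Cᵀ)) = exp(fromBlocks C 0 0 (−Cᵀ)) * exp(fromBlocks 0 0 (exp(Cᵀ) * A * exp(C)) 0), where exp denotes the matrix exponential and fromBlocks P Q R S denotes the 2M×2M matrix with blocks P (top-left), Q (top-right), R (bottom-left), S (bottom-right). (This is the finite-dimensional symplectic-representation identity underlying Proposition 1(a): e^{âAâ} e^{â†Câ} = e^{â†Câ} e^{â (e^C)ᵀ A e^C â}.) -/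
open Matrix NormedSpace

noncomputable section

/-- `fromBlocks` of a pair (block diagonal), as an `AddMonoidHom`. -/
def fbHom (n : Type*) : (Matrix n n ℂ × Matrix n n ℂ) →+ Matrix (n ⊕ n) (n ⊕ n) ℂ where
  toFun p := fromBlocks p.1 0 0 p.2
  map_zero' := by simp [← fromBlocks_zero]
  map_add' p q := by simp [fromBlocks_add]

lemma continuous_fbHom (n : Type*) : Continuous (fbHom n) := by
  apply continuous_matrix
  rintro (i | i) (j | j) <;>
    simp only [fbHom, AddMonoidHom.coe_mk, ZeroHom.coe_mk, fromBlocks_apply₁₁,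
      fromBlocks_apply₁₂, fromBlocks_apply₂₁, fromBlocks_apply₂₂] <;>
    first
      | exact continuous_const
      | exact ((continuous_apply _).comp ((continuous_apply _).comp continuous_fst))
      | exact ((continuous_apply _).comp ((continuous_apply _).comp continuous_snd))

lemma fromBlocks_pow {n : Type*} [Fintype n] [DecidableEq n] (X Y : Matrix n n ℂ) (k : ℕ) :
    fromBlocks X 0 0 Y ^ k = fromBlocks (X ^ k) 0 0 (Y ^ k) := by
  induction k with
  | zero => simp [fromBlocks_one]
  | succ k ih => simp [pow_succ, ih, fromBlocks_multiply]

/-- The exponential of a block diagonal `2 × 2` block matrix. -/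
lemma exp_fromBlocks_diag {n : Type*} [Fintype n] [DecidableEq n] (X Y : Matrix n n ℂ) :
    exp (fromBlocks X 0 0 Y) = fromBlocks (exp X) 0 0 (exp Y) := by
  letI : SeminormedRing (Matrix n n ℂ) := Matrix.linftyOpSemiNormedRing
  letI : NormedRing (Matrix n n ℂ) := Matrix.linftyOpNormedRing
  letI : NormedAlgebra ℂ (Matrix n n ℂ) := Matrix.linftyOpNormedAlgebra
  have hX : Summable fun k : ℕ => (k.factorial : ℂ)⁻¹ • X ^ k := expSeries_summable' X
  have hY : Summable fun k : ℕ => (k.factorial : ℂ)⁻¹ • Y ^ k := expSeries_summable' Y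
  have h : HasSum (fun k : ℕ => fbHom n ((k.factorial : ℂ)⁻¹ • X ^ k, (k.factorial : ℂ)⁻¹ • Y ^ k))
      (fbHom n (∑' k : ℕ, (k.factorial : ℂ)⁻¹ • X ^ k, ∑' k : ℕ, (k.factorial : ℂ)⁻¹ • Y ^ k)) :=
    (hX.hasSum.prodMk hY.hasSum).map (fbHom n) (continuous_fbHom n)
  rw [exp_eq_tsum (𝕂 := ℂ), exp_eq_tsum (𝕂 := ℂ)]
  have hterm : ∀ k : ℕ, fbHom n ((k.factorial : ℂ)⁻¹ • X ^ k, (k.factorial : ℂ)⁻¹ • Y ^ k)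
      = (k.factorial : ℂ)⁻¹ • fromBlocks X 0 0 Y ^ k := by
    intro k
    simp [fbHom, fromBlocks_pow, fromBlocks_smul, smul_zero]
  calc (∑' k : ℕ, (k.factorial : ℂ)⁻¹ • fromBlocks X 0 0 Y ^ k)
      = ∑' k : ℕ, fbHom n ((k.factorial : ℂ)⁻¹ • X ^ k, (k.factorial : ℂ)⁻¹ • Y ^ k) := by
        simp_rw [hterm]
    _ = fbHom n (∑' k : ℕ, (k.factorial : ℂ)⁻¹ • X ^ k, ∑' k : ℕ, (k.factorial : ℂ)⁻¹ • Y ^ k) :=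
        h.tsum_eq
    _ = fromBlocks (∑' k : ℕ, (k.factorial : ℂ)⁻¹ • X ^ k) 0 0
          (∑' k : ℕ, (k.factorial : ℂ)⁻¹ • Y ^ k) := rfl

/-- The exponential of a square-zero matrix. -/
lemma exp_of_sq_zero {n : Type*} [Fintype n] [DecidableEq n] (X : Matrix n n ℂ)
    (h : X * X = 0) : exp X = 1 + X := by
  letI : SeminormedRing (Matrix n n ℂ) := Matrix.linftyOpSemiNormedRing
  letI : NormedRing (Matrix n n ℂ) := Matrix.linftyOpNormedRing
  letI : NormedAlgebra ℂ (Matrix n n ℂ) := Matrix.linftyOpNormedAlgebra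
  rw [exp_eq_tsum (𝕂 := ℂ)]
  beta_reduce
  have hpow : ∀ k, 2 ≤ k → X ^ k = 0 := by
    intro k hk
    have : X ^ k = X ^ 2 * X ^ (k - 2) := by rw [← pow_add]; congr 1; omega
    rw [this, sq, h, Matrix.zero_mul]
  rw [tsum_eq_sum (s := Finset.range 2)]
  · simp [Finset.sum_range_succ]
  · intro k hk
    have : 2 ≤ k := by simp at hk; omega
    simp [hpow k this]

/-- **Proposition 1(a), finite-dimensional form.**
For `M × M` complex matrices `A` (symmetric) and `C`, the block-matrix identity
`exp [[0,0],[A,0]] * exp [[C,0],[0,-Cᵀ]]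
  = exp [[C,0],[0,-Cᵀ]] * exp [[0,0],[exp(Cᵀ) A exp(C), 0]]` holds. -/
theorem prop1a_block (M : ℕ) (hM : 0 < M) (A C : Matrix (Fin M) (Fin M) ℂ)
    (hA : Aᵀ = A) :
    NormedSpace.exp (fromBlocks (0 : Matrix (Fin M) (Fin M) ℂ) 0 A 0) *
        NormedSpace.exp (fromBlocks C 0 0 (-Cᵀ)) =
      NormedSpace.exp (fromBlocks C 0 0 (-Cᵀ)) *
        NormedSpace.exp
          (fromBlocks (0 : Matrix (Fin M) (Fin M) ℂ) 0
            (NormedSpace.exp Cᵀ * A * NormedSpace.exp C) 0) := by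
  have hnil : ∀ B : Matrix (Fin M) (Fin M) ℂ,
      exp (fromBlocks (0 : Matrix (Fin M) (Fin M) ℂ) 0 B 0) =
        1 + (fromBlocks (0 : Matrix (Fin M) (Fin M) ℂ) 0 B 0 :
          Matrix (Fin M ⊕ Fin M) (Fin M ⊕ Fin M) ℂ) := by
    intro B
    apply exp_of_sq_zero
    simp [fromBlocks_multiply]
  have hinv : exp (-Cᵀ) * exp Cᵀ = 1 := by
    rw [← Matrix.exp_add_of_commute _ _ (Commute.neg_left (Commute.refl Cᵀ))]
    simp
  rw [hnil, hnil, exp_fromBlocks_diag, add_mul, mul_add, one_mul, mul_one]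
  congr 1
  simp only [fromBlocks_multiply, Matrix.mul_zero, Matrix.zero_mul, add_zero, zero_add,
    Matrix.mul_one, Matrix.one_mul, mul_zero, zero_mul]
  rw [← Matrix.mul_assoc, ← Matrix.mul_assoc, hinv, Matrix.one_mul]
end
end

section
/- Let M be a positive integer and let A and B be M×M complex matrices with A and B symmetric, and suppose that 1 − A*B is invertible (where 1 denotes the identity matrix). Then 1 − B*A is also invertible, and the following identity of 2M×2M block matrices holds: (fromBlocks 1 0 (−A) 1) * (fromBlocks 1 B 0 1) = (fromBlocks 1 (B*(1−A*B)⁻¹) 0 1) * (fromBlocks ((1−B*A)⁻¹) 0 0 (1−A*B)) * (fromBlocks 1 0 (−((1−A*B)⁻¹*A)) 1). (This is the finite-dimensional factorization underlying Proposition 1(c), which normally orders e^{âAâ} e^{â†Bâ†}.) -/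
open Matrix

/-- **Proposition 1(c), finite-dimensional factorization.**
For symmetric `M × M` complex matrices `A, B` with `1 - A*B` invertible,
`1 - B*A` is invertible and
`[[1,0],[-A,1]] * [[1,B],[0,1]]
  = [[1, B(1-AB)⁻¹],[0,1]] * [[(1-BA)⁻¹, 0],[0, 1-AB]] * [[1,0],[-(1-AB)⁻¹A, 1]]`. -/
theorem prop1c_block (M : ℕ) (hM : 0 < M) (A B : Matrix (Fin M) (Fin M) ℂ)
    (hA : Aᵀ = A) (hB : Bᵀ = B) (h : IsUnit (1 - A * B)) :
    IsUnit (1 - B * A) ∧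
      fromBlocks (1 : Matrix (Fin M) (Fin M) ℂ) 0 (-A) 1 * fromBlocks 1 B 0 1 =
        fromBlocks (1 : Matrix (Fin M) (Fin M) ℂ) (B * (1 - A * B)⁻¹) 0 1 *
          fromBlocks ((1 - B * A)⁻¹) 0 0 (1 - A * B) *
          fromBlocks (1 : Matrix (Fin M) (Fin M) ℂ) 0 (-((1 - A * B)⁻¹ * A)) 1 := by
  have htr : (1 - A * B)ᵀ = 1 - B * A := by
    rw [transpose_sub, transpose_mul, hA, hB, transpose_one]
  have hBA : IsUnit (1 - B * A) := by
    rw [← htr, Matrix.isUnit_transpose]; exact h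
  refine ⟨hBA, ?_⟩
  have hC2 : (1 - A * B) * (1 - A * B)⁻¹ = 1 := mul_nonsing_inv _ (h.map detMonoidHom)
  have hC1 : (1 - A * B)⁻¹ * (1 - A * B) = 1 := nonsing_inv_mul _ (h.map detMonoidHom)
  have hD1 : (1 - B * A)⁻¹ * (1 - B * A) = 1 := nonsing_inv_mul _ (hBA.map detMonoidHom)
  have key : (1 - B * A) * B = B * (1 - A * B) := by noncomm_ring
  have hBC : B * (1 - A * B)⁻¹ = (1 - B * A)⁻¹ * B := by
    calc B * (1 - A * B)⁻¹
        = ((1 - B * A)⁻¹ * (1 - B * A)) * (B * (1 - A * B)⁻¹) := by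
          rw [hD1, Matrix.one_mul]
      _ = (1 - B * A)⁻¹ * (((1 - B * A) * B) * (1 - A * B)⁻¹) := by
          rw [Matrix.mul_assoc, Matrix.mul_assoc]
      _ = (1 - B * A)⁻¹ * (B * ((1 - A * B) * (1 - A * B)⁻¹)) := by
          rw [key, Matrix.mul_assoc]
      _ = (1 - B * A)⁻¹ * B := by rw [hC2, Matrix.mul_one]
  have hTL : (1 - B * A)⁻¹ - B * (1 - A * B)⁻¹ * A = 1 := by
    rw [hBC, Matrix.mul_assoc]
    nth_rewrite 1 [← Matrix.mul_one ((1 - B * A)⁻¹)]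
    rw [← Matrix.mul_sub, hD1]
  simp only [fromBlocks_multiply, Matrix.one_mul, Matrix.mul_one, Matrix.mul_zero,
    Matrix.zero_mul, add_zero, zero_add, Matrix.mul_neg, Matrix.neg_mul]
  rw [fromBlocks_inj]
  refine ⟨?_, ?_, ?_, by noncomm_ring⟩
  · rw [Matrix.mul_assoc (B * (1 - A * B)⁻¹), ← Matrix.mul_assoc (1 - A*B), hC2,
      Matrix.one_mul, ← sub_eq_add_neg]
    exact hTL.symm
  · rw [Matrix.mul_assoc, hC1, Matrix.mul_one]
  · rw [← Matrix.mul_assoc, hC2, Matrix.one_mul]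
end

section
/- Let S and R be M×M symmetric matrices over ℂ, let h(u) = Σ_{k≥0} (Nat.choose (2k) k / 4^k) u^k be the formal power series of (1−u)^{−1/2} in one variable, and for each i ∈ {1,…,M} let u_i be the multivariate formal power series u_i = Σ_{m=1}^{M} S_{im} R_{im} x_i x_m in the variables x₁,…,x_M (which has zero constant term, so substitution into h is well defined). Let g = ∏_{i=1}^{M} h(u_i) as a multivariate formal power series. Then for any even N ≤ M and any distinct indices β₁ < … < β_N in {1,…,M}, the coefficient of the square-free monomial x_{β₁}⋯x_{β_N} in g equals Haf[(S∘R)_{(β,β)}], the Hafnian of the N×N submatrix of the Hadamard product S∘R on the rows and columns indexed by β. -/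
open Matrix

open scoped Classical in
/-- The Hafnian of an `m × m` matrix: the sum over all partitions of `{1,…,m}` into
unordered pairs (encoded as fixed-point-free involutions `σ`) of the products
`∏ A i (σ i)` over the pairs `{i, σ i}` (each pair counted once, via `i < σ i`). -/
noncomputable def hafnian {R : Type*} [CommSemiring R] {m : ℕ}
    (A : Matrix (Fin m) (Fin m) R) : R :=
  ∑ σ ∈ Finset.univ.filter
      (fun σ : Equiv.Perm (Fin m) => σ * σ = 1 ∧ ∀ i, σ i ≠ i),
    ∏ i ∈ Finset.univ.filter (fun i => i < σ i), A i (σ i)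

/-- Substitution of a multivariate formal power series `u` with zero constant term into a
one-variable formal power series `h`: the coefficient of a monomial `d` in `h(u)` is
`∑_{k=0}^{|d|} (coeff k h) * coeff d (u^k)` (the sum truncates since `coeff d (u^k) = 0`
for `k > |d|` when `u` has zero constant term). -/
noncomputable def substPS {σ : Type*} (h : PowerSeries ℂ) (u : MvPowerSeries σ ℂ) :
    MvPowerSeries σ ℂ :=
  fun d => ∑ k ∈ Finset.range (d.sum (fun _ e => e) + 1),
    PowerSeries.coeff (R := ℂ) k h * MvPowerSeries.coeff (R := ℂ) d (u ^ k)

namespace Prop2Aux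

open MvPowerSeries

noncomputable def hps : PowerSeries ℂ := PowerSeries.mk fun k => ((Nat.choose (2 * k) k : ℂ) / 4 ^ k)

variable {M : ℕ}

noncomputable def uu (S R : Matrix (Fin M) (Fin M) ℂ) (i : Fin M) : MvPowerSeries (Fin M) ℂ :=
  ∑ m : Fin M, MvPowerSeries.C (σ := Fin M) (R := ℂ) (S i m * R i m) * MvPowerSeries.X i * MvPowerSeries.X m

noncomputable def gg (S R : Matrix (Fin M) (Fin M) ℂ) (i : Fin M) : MvPowerSeries (Fin M) ℂ :=
  substPS hps (uu S R i)

lemma coeff_substPS {σ : Type*} (h : PowerSeries ℂ) (u : MvPowerSeries σ ℂ) (d : σ →₀ ℕ) :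
    MvPowerSeries.coeff (R := ℂ) d (substPS h u) =
      ∑ k ∈ Finset.range (d.sum (fun _ e => e) + 1),
        PowerSeries.coeff (R := ℂ) k h * MvPowerSeries.coeff (R := ℂ) d (u ^ k) := rfl

lemma uu_eq (S R : Matrix (Fin M) (Fin M) ℂ) (i : Fin M) :
    uu S R i = ∑ m : Fin M,
      MvPowerSeries.monomial (R := ℂ) (Finsupp.single i 1 + Finsupp.single m 1) (S i m * R i m) := by
  unfold uu
  refine Finset.sum_congr rfl fun m _ => ?_
  have hC : MvPowerSeries.C (σ := Fin M) (R := ℂ) (S i m * R i m)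
      = MvPowerSeries.monomial (R := ℂ) (0 : Fin M →₀ ℕ) (S i m * R i m) := rfl
  rw [hC, X_def, X_def, monomial_mul_monomial, monomial_mul_monomial]
  simp

lemma coeff_uu (S R : Matrix (Fin M) (Fin M) ℂ) (i : Fin M) (e : Fin M →₀ ℕ) :
    MvPowerSeries.coeff (R := ℂ) e (uu S R i) =
      ∑ m : Fin M, if e = Finsupp.single i 1 + Finsupp.single m 1 then S i m * R i m else 0 := by
  classical
  rw [uu_eq, map_sum]
  refine Finset.sum_congr rfl fun m _ => ?_
  rw [coeff_monomial]

lemma le_of_coeff_uu_pow_ne_zero (S R : Matrix (Fin M) (Fin M) ℂ) (i : Fin M) :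
    ∀ (k : ℕ) (e : Fin M →₀ ℕ), MvPowerSeries.coeff (R := ℂ) e (uu S R i ^ k) ≠ 0 → k ≤ e i := by
  classical
  intro k
  induction k with
  | zero => intro e _; exact Nat.zero_le _
  | succ k ih =>
    intro e h
    rw [pow_succ, coeff_mul] at h
    obtain ⟨p, hp, hne⟩ := Finset.exists_ne_zero_of_sum_ne_zero h
    have h1 : MvPowerSeries.coeff (R := ℂ) p.1 (uu S R i ^ k) ≠ 0 := left_ne_zero_of_mul hne
    have h2 : MvPowerSeries.coeff (R := ℂ) p.2 (uu S R i) ≠ 0 := right_ne_zero_of_mul hne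
    have hk := ih _ h1
    have h2' : 1 ≤ p.2 i := by
      rw [coeff_uu] at h2
      obtain ⟨m, -, hm⟩ := Finset.exists_ne_zero_of_sum_ne_zero h2
      have hpm : p.2 = Finsupp.single i 1 + Finsupp.single m 1 := by
        by_contra hc; simp [hc] at hm
      simp [hpm, Finsupp.add_apply, Finsupp.single_apply]
    have hpe : p.1 + p.2 = e := Finset.HasAntidiagonal.mem_antidiagonal.1 hp
    have : p.1 i + p.2 i = e i := by rw [← hpe]; rfl
    omega

lemma coeff_gg_zero (S R : Matrix (Fin M) (Fin M) ℂ) (i : Fin M) :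
    MvPowerSeries.coeff (R := ℂ) (0 : Fin M →₀ ℕ) (gg S R i) = 1 := by
  rw [gg, coeff_substPS]
  simp [hps, PowerSeries.coeff_mk]

lemma coeff_gg_pair (S R : Matrix (Fin M) (Fin M) ℂ) (i m : Fin M) (hmi : m ≠ i) :
    MvPowerSeries.coeff (R := ℂ) (Finsupp.single i 1 + Finsupp.single m 1) (gg S R i)
      = (S i m * R i m) / 2 := by
  classical
  rw [gg, coeff_substPS]
  have hsum : (Finsupp.single i 1 + Finsupp.single m 1).sum (fun _ e => e) = 2 := by
    rw [Finsupp.sum_add_index' (fun _ => rfl) (fun _ _ _ => rfl)]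
    simp
  rw [hsum]
  have h3 : Finset.range (2 + 1) = {0, 1, 2} := by decide
  rw [h3]
  have hd0 : (Finsupp.single i 1 + Finsupp.single m 1 : Fin M →₀ ℕ) ≠ 0 := by
    intro h
    have := DFunLike.congr_fun h i
    simp [Finsupp.single_apply, hmi] at this
  have t0 : MvPowerSeries.coeff (R := ℂ) (Finsupp.single i 1 + Finsupp.single m 1) ((uu S R i) ^ 0) = 0 := by
    rw [pow_zero, MvPowerSeries.coeff_one, if_neg hd0]
  have t2 : MvPowerSeries.coeff (R := ℂ) (Finsupp.single i 1 + Finsupp.single m 1) ((uu S R i) ^ 2) = 0 := by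
    by_contra h
    have := le_of_coeff_uu_pow_ne_zero S R i 2 _ h
    simp [Finsupp.add_apply, Finsupp.single_apply, hmi] at this
  have t1 : MvPowerSeries.coeff (R := ℂ) (Finsupp.single i 1 + Finsupp.single m 1) ((uu S R i) ^ 1) = S i m * R i m := by
    rw [pow_one, coeff_uu]
    rw [Finset.sum_eq_single_of_mem m (Finset.mem_univ m)]
    · rw [if_pos rfl]
    · intro m' _ hm'
      rw [if_neg]
      intro hc
      have : Finsupp.single m 1 = Finsupp.single m' 1 := add_left_cancel hc
      exact hm' (Finsupp.single_left_injective one_ne_zero this).symm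
  rw [Finset.sum_insert (by decide), Finset.sum_insert (by decide), Finset.sum_singleton]
  simp only [t0, t1, t2, mul_zero, zero_add, add_zero]
  rw [hps, PowerSeries.coeff_mk]
  norm_num
  ring

lemma coeff_gg_vanish (S R : Matrix (Fin M) (Fin M) ℂ) (i : Fin M) (e : Fin M →₀ ℕ)
    (he0 : e ≠ 0) (hei : e i ≤ 1)
    (hno : ∀ m, m ≠ i → e ≠ Finsupp.single i 1 + Finsupp.single m 1) :
    MvPowerSeries.coeff (R := ℂ) e (gg S R i) = 0 := by
  classical
  rw [gg, coeff_substPS]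
  refine Finset.sum_eq_zero fun k _ => ?_
  match k with
  | 0 =>
    rw [pow_zero, MvPowerSeries.coeff_one, if_neg he0, mul_zero]
  | 1 =>
    rw [pow_one, coeff_uu]
    have : ∀ m ∈ (Finset.univ : Finset (Fin M)),
        (if e = Finsupp.single i 1 + Finsupp.single m 1 then S i m * R i m else 0) = 0 := by
      intro m _
      rw [if_neg]
      intro hc
      rcases eq_or_ne m i with rfl | hmi
      · rw [hc] at hei
        simp [Finsupp.add_apply, Finsupp.single_apply] at hei
      · exact hno m hmi hc
    rw [Finset.sum_congr rfl this, Finset.sum_const_zero, mul_zero]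
  | (n + 2) =>
    have : MvPowerSeries.coeff (R := ℂ) e (uu S R i ^ (n + 2)) = 0 := by
      by_contra h
      have := le_of_coeff_uu_pow_ne_zero S R i (n + 2) e h
      omega
    rw [this, mul_zero]

variable {N : ℕ}

def pairs (σ : Equiv.Perm (Fin N)) : Finset (Fin N) := Finset.univ.filter fun j => j < σ j

def owS (σ : Equiv.Perm (Fin N)) (T : Finset (Fin N)) : Finset (Fin N) :=
  T ∪ (pairs σ \ T).image σ

variable {σ : Equiv.Perm (Fin N)} {T : Finset (Fin N)}

lemma mem_pairs {j : Fin N} : j ∈ pairs σ ↔ j < σ j := by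
  simp [pairs]

lemma notMem_pairs (hinv : ∀ j, σ (σ j) = j) {j : Fin N} (hj : j ∈ pairs σ) :
    σ j ∉ pairs σ := by
  rw [mem_pairs] at *
  rw [hinv]
  exact fun h => absurd (h.trans hj) (lt_irrefl _)

lemma owS_lt (hinv : ∀ j, σ (σ j) = j) (hT : T ⊆ pairs σ) {j : Fin N} (hj : j ∈ pairs σ) :
    (j ∈ owS σ T ↔ j ∈ T) ∧ (σ j ∈ owS σ T ↔ j ∉ T) := by
  constructor
  · constructor
    · intro h
      rcases Finset.mem_union.1 h with h | h
      · exact h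
      · exfalso
        obtain ⟨p, hp, hpj⟩ := Finset.mem_image.1 h
        have hpp := Finset.mem_sdiff.1 hp |>.1
        rw [mem_pairs] at hpp hj
        have h1 : j < p := by rw [← hinv p, hpj] at hpp; exact hj.trans_eq (by rw [← hpj, hinv])
        have h2 : p < j := hpp.trans_eq hpj
        exact absurd (h1.trans h2) (lt_irrefl _)
    · exact fun h => Finset.mem_union_left _ h
  · constructor
    · intro h
      rcases Finset.mem_union.1 h with h | h
      · exact absurd (hT h) (notMem_pairs hinv hj)
      · obtain ⟨p, hp, hpj⟩ := Finset.mem_image.1 h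
        have : p = j := σ.injective hpj
        subst this
        exact (Finset.mem_sdiff.1 hp).2
    · intro h
      exact Finset.mem_union_right _ (Finset.mem_image_of_mem σ (Finset.mem_sdiff.2 ⟨hj, h⟩))

lemma owS_partition (hinv : ∀ j, σ (σ j) = j) (hfpf : ∀ j, σ j ≠ j)
    (hT : T ⊆ pairs σ) (j : Fin N) : j ∈ owS σ T ↔ σ j ∉ owS σ T := by
  rcases lt_or_gt_of_ne (hfpf j) with h | h
  · have hpj : σ j ∈ pairs σ := by rw [mem_pairs, hinv]; exact h
    have H := owS_lt hinv hT hpj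
    rw [hinv] at H
    constructor
    · intro hj hsj
      exact (H.2.1 hj) (H.1.1 hsj)
    · intro hsj
      by_contra hj
      exact (fun h' => hsj (H.1.2 h')) (by
        by_contra h''
        exact hj (H.2.2 h''))
  · have hpj : j ∈ pairs σ := mem_pairs.2 h
    have H := owS_lt hinv hT hpj
    constructor
    · intro hj hsj
      exact (H.2.1 hsj) (H.1.1 hj)
    · intro hsj
      refine H.1.2 ?_
      by_contra h'
      exact hsj (H.2.2 h')

lemma owS_union_image (hinv : ∀ j, σ (σ j) = j) (hfpf : ∀ j, σ j ≠ j) (hT : T ⊆ pairs σ) :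
    owS σ T ∪ (owS σ T).image σ = Finset.univ := by
  ext a
  simp only [Finset.mem_union, Finset.mem_image, Finset.mem_univ, iff_true]
  by_cases h : a ∈ owS σ T
  · exact Or.inl h
  · refine Or.inr ⟨σ a, ?_, hinv a⟩
    by_contra h'
    exact h ((owS_partition hinv hfpf hT a).2 h')

lemma owS_disjoint_image (hinv : ∀ j, σ (σ j) = j) (hfpf : ∀ j, σ j ≠ j) (hT : T ⊆ pairs σ) :
    Disjoint (owS σ T) ((owS σ T).image σ) := by
  rw [Finset.disjoint_left]
  intro a ha hb
  obtain ⟨p, hp, rfl⟩ := Finset.mem_image.1 hb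
  exact ((owS_partition hinv hfpf hT p).1 hp) ha

lemma sum_owS {A : Type*} [AddCommMonoid A] (hinv : ∀ j, σ (σ j) = j) (hfpf : ∀ j, σ j ≠ j)
    (hT : T ⊆ pairs σ) (f : Fin N → A) :
    ∑ j ∈ owS σ T, (f j + f (σ j)) = ∑ j : Fin N, f j := by
  classical
  rw [Finset.sum_add_distrib]
  have h2 : ∑ j ∈ owS σ T, f (σ j) = ∑ j ∈ (owS σ T).image σ, f j :=
    (Finset.sum_image (fun x _ y _ h => σ.injective h)).symm
  rw [h2, ← Finset.sum_union (owS_disjoint_image hinv hfpf hT),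
    owS_union_image hinv hfpf hT]

lemma prod_owS {A : Type*} [CommMonoid A] (hinv : ∀ j, σ (σ j) = j) (hfpf : ∀ j, σ j ≠ j)
    (hT : T ⊆ pairs σ) (f : Fin N → A) (hf : ∀ j, f (σ j) = f j) :
    ∏ j ∈ owS σ T, f j = ∏ j ∈ pairs σ, f j := by
  classical
  refine Finset.prod_nbij' (fun j => if j < σ j then j else σ j)
    (fun p => if p ∈ owS σ T then p else σ p) ?_ ?_ ?_ ?_ ?_
  · intro a _
    split_ifs with h
    · exact mem_pairs.2 h
    · rw [mem_pairs, hinv]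
      rcases lt_or_gt_of_ne (hfpf a) with h' | h'
      · exact h'
      · exact absurd h' h
  · intro p hp
    split_ifs with h
    · exact h
    · by_contra h'
      exact h ((owS_partition hinv hfpf hT p).2 (fun hc => h' hc))
  · intro a ha
    by_cases h : a < σ a
    · rw [if_pos h, if_pos ha]
    · rw [if_neg h, if_neg (fun hc => ((owS_partition hinv hfpf hT a).1 ha) hc), hinv]
  · intro p hp
    by_cases h : p ∈ owS σ T
    · rw [if_pos h, if_pos (mem_pairs.1 hp)]
    · rw [if_neg h, hinv, if_neg (asymm (mem_pairs.1 hp))]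
  · intro a _
    split_ifs with h
    · rfl
    · exact (hf a).symm

noncomputable def Phi (b : Fin N → Fin M) (σ : Equiv.Perm (Fin N)) (T : Finset (Fin N)) :
    Fin M →₀ (Fin M →₀ ℕ) :=
  ∑ j ∈ owS σ T, Finsupp.single (b j)
    (Finsupp.single (b j) 1 + Finsupp.single (b (σ j)) 1)

lemma Phi_apply_mem (b : Fin N → Fin M) (hb : Function.Injective b) {j : Fin N}
    (hj : j ∈ owS σ T) :
    Phi b σ T (b j) = Finsupp.single (b j) 1 + Finsupp.single (b (σ j)) 1 := by
  classical
  rw [Phi, Finsupp.finset_sum_apply]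
  rw [Finset.sum_eq_single_of_mem j hj]
  · rw [Finsupp.single_eq_same]
  · intro k _ hk
    rw [Finsupp.single_apply, if_neg (fun h => hk (hb h))]

lemma Phi_apply_zero (b : Fin N → Fin M) {x : Fin M} (hx : ∀ j ∈ owS σ T, b j ≠ x) :
    Phi b σ T x = 0 := by
  classical
  rw [Phi, Finsupp.finset_sum_apply]
  exact Finset.sum_eq_zero fun j hj => by
    rw [Finsupp.single_apply, if_neg (hx j hj)]

lemma Phi_ne_zero_iff (b : Fin N → Fin M) (hb : Function.Injective b) (j : Fin N) :
    Phi b σ T (b j) ≠ 0 ↔ j ∈ owS σ T := by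
  constructor
  · intro h
    by_contra hj
    refine h (Phi_apply_zero b fun k hk he => hj ?_)
    rwa [hb he] at hk
  · intro hj
    rw [Phi_apply_mem b hb hj]
    intro h
    have h2 := DFunLike.congr_fun h (b j)
    simp only [Finsupp.add_apply, Finsupp.single_eq_same, Finsupp.single_apply,
      Finsupp.coe_zero, Pi.zero_apply] at h2
    split at h2 <;> omega

lemma Phi_total (hinv : ∀ j, σ (σ j) = j) (hfpf : ∀ j, σ j ≠ j) (hT : T ⊆ pairs σ)
    (b : Fin N → Fin M) :
    ∑ i : Fin M, Phi b σ T i = ∑ j : Fin N, Finsupp.single (b j) (1 : ℕ) := by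
  classical
  calc ∑ i : Fin M, Phi b σ T i
      = ∑ i : Fin M, ∑ j ∈ owS σ T, (Finsupp.single (b j)
          (Finsupp.single (b j) 1 + Finsupp.single (b (σ j)) 1) : Fin M →₀ (Fin M →₀ ℕ)) i :=
        Finset.sum_congr rfl fun i _ => by rw [Phi, Finsupp.finset_sum_apply]
    _ = ∑ j ∈ owS σ T, ∑ i : Fin M, (Finsupp.single (b j)
          (Finsupp.single (b j) 1 + Finsupp.single (b (σ j)) 1) : Fin M →₀ (Fin M →₀ ℕ)) i :=
        Finset.sum_comm
    _ = ∑ j ∈ owS σ T, (Finsupp.single (b j) 1 + Finsupp.single (b (σ j)) 1) := by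
        refine Finset.sum_congr rfl fun j _ => ?_
        rw [Finset.sum_congr rfl fun i _ => Finsupp.single_apply,
          Finset.sum_ite_eq, if_pos (Finset.mem_univ _)]
    _ = ∑ j : Fin N, Finsupp.single (b j) 1 := sum_owS hinv hfpf hT _

end Prop2Aux
/-- **Proposition 2, formal power series form.** With
`h(u) = ∑_k (C(2k,k)/4^k) u^k` the power series of `(1-u)^{-1/2}` and
`u_i = ∑_m S_{im} R_{im} x_i x_m`, the coefficient of the square-free monomial
`x_{β₁} ⋯ x_{β_N}` in `g = ∏_{i=1}^M h(u_i)` equals the Hafnian of the `N × N`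
submatrix of the Hadamard product `S ∘ R` on the rows and columns of `β`. -/
theorem prop2_hafnian_coeff (M N : ℕ) (hN : Even N) (hNM : N ≤ M)
    (S R : Matrix (Fin M) (Fin M) ℂ) (hS : Sᵀ = S) (hR : Rᵀ = R)
    (β : Finset (Fin M)) (hβ : β.card = N) :
    MvPowerSeries.coeff (R := ℂ) (∑ i ∈ β, Finsupp.single i 1)
      (∏ i : Fin M,
        substPS (PowerSeries.mk fun k => ((Nat.choose (2 * k) k : ℂ) / 4 ^ k))
          (∑ m : Fin M,
            MvPowerSeries.C (σ := Fin M) (R := ℂ) (S i m * R i m) *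
              MvPowerSeries.X i * MvPowerSeries.X m)) =
    hafnian ((S.hadamard R).submatrix (β.orderEmbOfFin hβ) (β.orderEmbOfFin hβ)) := by
  classical
  have hg : ∀ i : Fin M,
      substPS (PowerSeries.mk fun k => ((Nat.choose (2 * k) k : ℂ) / 4 ^ k))
        (∑ m : Fin M, MvPowerSeries.C (σ := Fin M) (R := ℂ) (S i m * R i m) *
          MvPowerSeries.X i * MvPowerSeries.X m) = Prop2Aux.gg S R i := fun i => rfl
  simp only [hg]
  set b : Fin N → Fin M := ⇑(β.orderEmbOfFin hβ) with hb_def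
  have hbinj : Function.Injective b := (β.orderEmbOfFin hβ).injective
  have hbmem : ∀ j, b j ∈ β := fun j => Finset.orderEmbOfFin_mem β hβ j
  have himg : Finset.univ.image b = β := by
    apply Finset.eq_of_subset_of_card_le
    · intro x hx
      obtain ⟨j, -, rfl⟩ := Finset.mem_image.1 hx
      exact hbmem j
    · rw [hβ, Finset.card_image_of_injective _ hbinj, Finset.card_univ, Fintype.card_fin]
  set d : Fin M →₀ ℕ := ∑ i ∈ β, Finsupp.single i 1 with hd_def
  have hd_sum : d = ∑ j : Fin N, Finsupp.single (b j) 1 := by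
    rw [hd_def, ← himg, Finset.sum_image (fun x _ y _ h => hbinj h)]
  have hd_apply : ∀ v, d v = if v ∈ β then 1 else 0 := by
    intro v
    rw [hd_def, Finsupp.finset_sum_apply,
      Finset.sum_congr rfl fun i _ => Finsupp.single_apply, Finset.sum_ite_eq' β v fun _ => 1]
  rw [MvPowerSeries.coeff_prod]
  set A : Finset (Σ _ : Equiv.Perm (Fin N), Finset (Fin N)) :=
    (Finset.univ.filter (fun σ : Equiv.Perm (Fin N) => σ * σ = 1 ∧ ∀ i, σ i ≠ i)).sigma
      (fun σ => (Prop2Aux.pairs σ).powerset) with hA_def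
  set Φ : (Σ _ : Equiv.Perm (Fin N), Finset (Fin N)) → (Fin M →₀ (Fin M →₀ ℕ)) :=
    fun x => Prop2Aux.Phi b x.1 x.2 with hΦ_def
  have hAprop : ∀ x ∈ A, (∀ j, x.1 (x.1 j) = j) ∧ (∀ j, x.1 j ≠ j) ∧ x.2 ⊆ Prop2Aux.pairs x.1 := by
    intro x hx
    rw [hA_def, Finset.mem_sigma] at hx
    obtain ⟨h1, h2⟩ := hx
    have h1' := (Finset.mem_filter.1 h1).2
    refine ⟨fun j => ?_, h1'.2, Finset.mem_powerset.1 h2⟩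
    have := Equiv.ext_iff.1 h1'.1 j
    simpa [Equiv.Perm.mul_apply] using this
  have hsymS : ∀ x y, S x y = S y x := by
    intro x y
    conv_lhs => rw [← hS]
    rw [Matrix.transpose_apply]
  have hsymR : ∀ x y, R x y = R y x := by
    intro x y
    conv_lhs => rw [← hR]
    rw [Matrix.transpose_apply]
  -- weight of each image point
  have hw : ∀ x ∈ A, (∏ i : Fin M, MvPowerSeries.coeff (R := ℂ) (Φ x i) (Prop2Aux.gg S R i))
      = ∏ p ∈ Prop2Aux.pairs x.1, ((S (b p) (b (x.1 p)) * R (b p) (b (x.1 p))) / 2) := by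
    intro x hx
    obtain ⟨σ, T⟩ := x
    obtain ⟨hinv, hfpf, hT⟩ := hAprop ⟨σ, T⟩ hx
    dsimp only at hinv hfpf hT ⊢
    calc ∏ i : Fin M, MvPowerSeries.coeff (R := ℂ) (Prop2Aux.Phi b σ T i) (Prop2Aux.gg S R i)
        = ∏ i ∈ (Prop2Aux.owS σ T).image b,
            MvPowerSeries.coeff (R := ℂ) (Prop2Aux.Phi b σ T i) (Prop2Aux.gg S R i) := by
          symm
          apply Finset.prod_subset (Finset.subset_univ _)
          intro i _ hi
          have hz : Prop2Aux.Phi b σ T i = 0 :=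
            Prop2Aux.Phi_apply_zero b fun j hj he => hi (Finset.mem_image.2 ⟨j, hj, he⟩)
          rw [hz, Prop2Aux.coeff_gg_zero]
      _ = ∏ j ∈ Prop2Aux.owS σ T,
            MvPowerSeries.coeff (R := ℂ) (Prop2Aux.Phi b σ T (b j)) (Prop2Aux.gg S R (b j)) :=
          Finset.prod_image (fun x _ y _ h => hbinj h)
      _ = ∏ j ∈ Prop2Aux.owS σ T, ((S (b j) (b (σ j)) * R (b j) (b (σ j))) / 2) := by
          refine Finset.prod_congr rfl fun j hj => ?_
          rw [Prop2Aux.Phi_apply_mem b hbinj hj,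
            Prop2Aux.coeff_gg_pair S R _ _ (fun h => hfpf j (hbinj h))]
      _ = ∏ p ∈ Prop2Aux.pairs σ, ((S (b p) (b (σ p)) * R (b p) (b (σ p))) / 2) := by
          apply Prop2Aux.prod_owS hinv hfpf hT
          intro j
          rw [hinv, hsymS (b (σ j)) (b j), hsymR (b (σ j)) (b j)]
  -- injectivity of Φ on A
  have hinjΦ : ∀ x ∈ A, ∀ y ∈ A, Φ x = Φ y → x = y := by
    intro x hx y hy hxy
    obtain ⟨σ, T⟩ := x
    obtain ⟨σ', T'⟩ := y
    obtain ⟨hinvx, hfpfx, hTx⟩ := hAprop ⟨σ, T⟩ hx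
    obtain ⟨hinvy, hfpfy, hTy⟩ := hAprop ⟨σ', T'⟩ hy
    dsimp only at hinvx hfpfx hTx hinvy hfpfy hTy
    have hxy' : Prop2Aux.Phi b σ T = Prop2Aux.Phi b σ' T' := hxy
    have howeq : Prop2Aux.owS σ T = Prop2Aux.owS σ' T' := by
      ext j
      rw [← Prop2Aux.Phi_ne_zero_iff b hbinj j, ← Prop2Aux.Phi_ne_zero_iff b hbinj j, hxy']
    have hagree : ∀ j ∈ Prop2Aux.owS σ T, σ j = σ' j := by
      intro j hj
      have e1 := Prop2Aux.Phi_apply_mem b hbinj hj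
      have e2 := Prop2Aux.Phi_apply_mem b hbinj (howeq ▸ hj)
      rw [hxy'] at e1
      have e3 := (e2.symm.trans e1)
      have e4 := add_left_cancel e3
      exact (hbinj (Finsupp.single_left_injective one_ne_zero e4)).symm
    have hσeq : σ = σ' := by
      apply Equiv.ext
      intro j
      by_cases hj : j ∈ Prop2Aux.owS σ T
      · exact hagree j hj
      · have hk : σ j ∈ Prop2Aux.owS σ T := by
          by_contra h'
          exact hj ((Prop2Aux.owS_partition hinvx hfpfx hTx j).2 h')
        have h1 : σ (σ j) = σ' (σ j) := hagree (σ j) hk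
        rw [hinvx] at h1
        have h2 := congrArg σ' h1.symm
        rw [hinvy] at h2
        exact h2
    subst hσeq
    have hTeq : T = T' := by
      ext j
      by_cases hp : j ∈ Prop2Aux.pairs σ
      · rw [← (Prop2Aux.owS_lt hinvx hTx hp).1, ← (Prop2Aux.owS_lt hinvy hTy hp).1, howeq]
      · constructor
        · intro h; exact absurd (hTx h) hp
        · intro h; exact absurd (hTy h) hp
    rw [hTeq]
  -- the image is inside the antidiagonal
  have himage : A.image Φ ⊆ Finset.finsuppAntidiag Finset.univ d := by
    intro l hl
    obtain ⟨x, hx, rfl⟩ := Finset.mem_image.1 hl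
    obtain ⟨hinv, hfpf, hT⟩ := hAprop x hx
    rw [Finset.mem_finsuppAntidiag]
    refine ⟨?_, Finset.subset_univ _⟩
    rw [hd_sum]
    exact Prop2Aux.Phi_total hinv hfpf hT b
  -- terms outside the image vanish
  have hzero : ∀ l ∈ Finset.finsuppAntidiag Finset.univ d, l ∉ A.image Φ →
      (∏ i : Fin M, MvPowerSeries.coeff (R := ℂ) (l i) (Prop2Aux.gg S R i)) = 0 := by
    intro l hl hlim
    by_contra hprod
    apply hlim
    have hsum : ∑ i : Fin M, l i = d := (Finset.mem_finsuppAntidiag.1 hl).1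
    have hcoeff : ∀ i, MvPowerSeries.coeff (R := ℂ) (l i) (Prop2Aux.gg S R i) ≠ 0 := by
      intro i h
      exact hprod (Finset.prod_eq_zero (Finset.mem_univ i) h)
    have happ : ∀ v, ∑ i : Fin M, l i v = d v := by
      intro v
      rw [← hsum]
      exact (Finsupp.finset_sum_apply _ _ _).symm
    have hle1 : ∀ (i : Fin M) v, l i v ≤ 1 := by
      intro i v
      have h1 : l i v ≤ ∑ x : Fin M, l x v :=
        Finset.single_le_sum (f := fun x => l x v) (fun _ _ => Nat.zero_le _) (Finset.mem_univ i)
      have h2 := happ v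
      have h4 : d v ≤ 1 := by rw [hd_apply]; split <;> omega
      omega
    have hdich : ∀ i, l i = 0 ∨ ∃ m, m ≠ i ∧ l i = Finsupp.single i 1 + Finsupp.single m 1 := by
      intro i
      by_cases h0 : l i = 0
      · exact Or.inl h0
      · right
        by_contra hno
        push_neg at hno
        exact hcoeff i (Prop2Aux.coeff_gg_vanish S R i (l i) h0 (hle1 i i) hno)
    have huniq : ∀ v (i i' : Fin M), 1 ≤ l i v → 1 ≤ l i' v → i = i' := by
      intro v i i' h1 h2
      by_contra hne
      have e1 : ∑ x : Fin M, l x v = l i v + ∑ x ∈ Finset.univ.erase i, l x v :=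
        (Finset.add_sum_erase _ (fun x => l x v) (Finset.mem_univ i)).symm
      have e2 : l i' v ≤ ∑ x ∈ Finset.univ.erase i, l x v :=
        Finset.single_le_sum (f := fun x => l x v) (fun _ _ => Nat.zero_le _)
          (Finset.mem_erase.2 ⟨fun h => hne h.symm, Finset.mem_univ _⟩)
      have e3 := happ v
      have e4 : d v ≤ 1 := by rw [hd_apply]; split <;> omega
      omega
    have hsupp : ∀ (i : Fin M) v, 1 ≤ l i v → v ∈ β := by
      intro i v h
      by_contra hv
      have h1 : l i v ≤ ∑ x : Fin M, l x v :=
        Finset.single_le_sum (f := fun x => l x v) (fun _ _ => Nat.zero_le _) (Finset.mem_univ i)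
      have h2 := happ v
      have h3 : d v = 0 := by rw [hd_apply, if_neg hv]
      omega
    have key : ∀ (x y : Fin M), l x = Finsupp.single x 1 + Finsupp.single y 1 →
        y ≠ x ∧ l x x = 1 ∧ l x y = 1 := by
      intro x y h
      have hyx : y ≠ x := by
        intro he
        have h2 : l x x = 2 := by
          rw [h, Finsupp.add_apply, Finsupp.single_apply, Finsupp.single_apply,
            if_pos rfl, if_pos he]
        have := hle1 x x
        omega
      refine ⟨hyx, ?_, ?_⟩
      · simp [h, Finsupp.add_apply, Finsupp.single_apply, hyx]
      · simp [h, Finsupp.add_apply, Finsupp.single_apply, Ne.symm hyx]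
    have hbsurj : ∀ v ∈ β, ∃ j : Fin N, b j = v := by
      intro v hv
      rw [← himg] at hv
      obtain ⟨j, -, hj⟩ := Finset.mem_image.1 hv
      exact ⟨j, hj⟩
    have hselfβ : ∀ i : Fin M, l i ≠ 0 → i ∈ β := by
      intro i h0
      rcases hdich i with h | ⟨m, hmi, hm⟩
      · exact absurd h h0
      · exact hsupp i i (by rw [(key i m hm).2.1])
    have hex : ∀ j : Fin N, ∃ k : Fin N,
        l (b j) = Finsupp.single (b j) 1 + Finsupp.single (b k) 1 ∨
        l (b k) = Finsupp.single (b k) 1 + Finsupp.single (b j) 1 := by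
      intro j
      by_cases h0 : l (b j) = 0
      · have hdj : d (b j) = 1 := by rw [hd_apply, if_pos (hbmem j)]
        have hs1 : ∑ i : Fin M, l i (b j) = 1 := by rw [happ, hdj]
        have hex_i : ∃ i, 1 ≤ l i (b j) := by
          by_contra hno
          push_neg at hno
          have : ∑ i : Fin M, l i (b j) = 0 :=
            Finset.sum_eq_zero fun i _ => by have := hno i; omega
          omega
        obtain ⟨i, hi⟩ := hex_i
        have hi0 : l i ≠ 0 := by
          intro hc
          rw [hc] at hi
          simp at hi
        rcases hdich i with h | ⟨m, hmi, hm⟩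
        · exact absurd h hi0
        · have hibj : i ≠ b j := by
            intro hc
            rw [hc] at hi0
            exact hi0 h0
          have hmbj : m = b j := by
            by_contra hc
            rw [hm] at hi
            simp [Finsupp.add_apply, Finsupp.single_apply, hibj, hc] at hi
          obtain ⟨k, hk⟩ := hbsurj i (hselfβ i hi0)
          refine ⟨k, Or.inr ?_⟩
          rw [hk, ← hmbj]
          exact hm
      · rcases hdich (b j) with h | ⟨m, hmi, hm⟩
        · exact absurd h h0
        · have hmβ : m ∈ β := hsupp (b j) m (by rw [(key (b j) m hm).2.2])
          obtain ⟨k, hk⟩ := hbsurj m hmβ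
          exact ⟨k, Or.inl (by rw [hk]; exact hm)⟩
    have huniqR : ∀ j k k' : Fin N,
        (l (b j) = Finsupp.single (b j) 1 + Finsupp.single (b k) 1 ∨
          l (b k) = Finsupp.single (b k) 1 + Finsupp.single (b j) 1) →
        (l (b j) = Finsupp.single (b j) 1 + Finsupp.single (b k') 1 ∨
          l (b k') = Finsupp.single (b k') 1 + Finsupp.single (b j) 1) →
        k = k' := by
      intro j k k' h1 h2
      rcases h1 with h1 | h1 <;> rcases h2 with h2 | h2
      · have h3 : Finsupp.single (b j) 1 + Finsupp.single (b k) (1 : ℕ)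
            = Finsupp.single (b j) 1 + Finsupp.single (b k') 1 := h1.symm.trans h2
        exact hbinj (Finsupp.single_left_injective one_ne_zero (add_left_cancel h3))
      · exfalso
        have a1 := (key _ _ h1).2.1
        have a2 := (key _ _ h2).2.2
        exact (key _ _ h2).1 (huniq (b j) (b j) (b k') (by omega) (by omega))
      · exfalso
        have a1 := (key _ _ h2).2.1
        have a2 := (key _ _ h1).2.2
        exact (key _ _ h1).1 (huniq (b j) (b j) (b k) (by omega) (by omega))
      · have a1 := (key _ _ h1).2.2
        have a2 := (key _ _ h2).2.2
        exact hbinj (huniq (b j) (b k) (b k') (by omega) (by omega))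
    choose f hfrel using hex
    have hfinv : Function.Involutive f := by
      intro j
      exact huniqR (f j) (f (f j)) j (hfrel (f j)) (Or.symm (hfrel j))
    have hffpf : ∀ j, f j ≠ j := by
      intro j hc
      have h := hfrel j
      rw [hc] at h
      rcases h with h | h <;> exact (key _ _ h).1 rfl
    set σ0 : Equiv.Perm (Fin N) := Function.Involutive.toPerm f hfinv with hσ0
    have hσ0app : ∀ j, σ0 j = f j := fun j => rfl
    have hσ0mul : σ0 * σ0 = 1 := by
      apply Equiv.ext
      intro j
      simp only [Equiv.Perm.mul_apply, Equiv.Perm.one_apply, hσ0app]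
      exact hfinv j
    set T0 : Finset (Fin N) := Finset.univ.filter (fun j => l (b j) ≠ 0 ∧ j < σ0 j) with hT0
    have hinv0 : ∀ j, σ0 (σ0 j) = j := fun j => hfinv j
    have hfpf0 : ∀ j, σ0 j ≠ j := fun j => hffpf j
    have hT0sub : T0 ⊆ Prop2Aux.pairs σ0 := by
      intro j hj
      rw [Prop2Aux.mem_pairs]
      exact (Finset.mem_filter.1 hj).2.2
    have hOv : ∀ j : Fin N, l (b j) ≠ 0 →
        l (b j) = Finsupp.single (b j) 1 + Finsupp.single (b (f j)) 1 := by
      intro j h0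
      rcases hfrel j with h | h
      · exact h
      · exfalso
        rcases hdich (b j) with hh | ⟨m, hmi, hm⟩
        · exact h0 hh
        · have a1 := (key _ _ hm).2.1
          have a2 := (key _ _ h).2.2
          exact (key _ _ h).1 (huniq (b j) (b j) (b (f j)) (by omega) (by omega))
    have hOone : ∀ j : Fin N, l (b j) ≠ 0 ↔ ¬ (l (b (f j)) ≠ 0) := by
      intro j
      constructor
      · intro h0 h1
        have e0 := hOv j h0
        have a2 := (key _ _ e0).2.2
        have e1 := hOv (f j) h1
        have a1 := (key _ _ e1).2.1
        exact (key _ _ e0).1 (huniq (b (f j)) (b (f j)) (b j) (by omega) (by omega))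
      · intro h1
        rw [not_not] at h1
        rcases hfrel j with h | h
        · intro hc
          have := (key _ _ h).2.1
          rw [hc] at this
          simp at this
        · exfalso
          have := (key _ _ h).2.1
          rw [h1] at this
          simp at this
    have howeq : ∀ j : Fin N, j ∈ Prop2Aux.owS σ0 T0 ↔ l (b j) ≠ 0 := by
      intro j
      rcases lt_trichotomy j (σ0 j) with hlt | heq | hgt
      · have hp : j ∈ Prop2Aux.pairs σ0 := Prop2Aux.mem_pairs.2 hlt
        rw [(Prop2Aux.owS_lt hinv0 hT0sub hp).1, hT0]
        simp only [Finset.mem_filter, Finset.mem_univ, true_and]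
        exact ⟨fun h => h.1, fun h => ⟨h, hlt⟩⟩
      · exact absurd heq.symm (hfpf0 j)
      · have hp : σ0 j ∈ Prop2Aux.pairs σ0 := by
          rw [Prop2Aux.mem_pairs, hinv0]
          exact hgt
        rw [Prop2Aux.owS_partition hinv0 hfpf0 hT0sub j,
          (Prop2Aux.owS_lt hinv0 hT0sub hp).1, hT0]
        simp only [Finset.mem_filter, Finset.mem_univ, true_and]
        rw [hinv0]
        constructor
        · intro h
          by_contra hc
          have h2 : l (b (σ0 j)) ≠ 0 := by
            by_contra hc2
            exact (hOone j).2 (fun hn => hn hc2) hc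
          exact h ⟨h2, hgt⟩
        · intro h0 hand
          exact ((hOone j).1 h0) hand.1
    refine Finset.mem_image.2 ⟨⟨σ0, T0⟩, ?_, ?_⟩
    · rw [hA_def, Finset.mem_sigma]
      refine ⟨Finset.mem_filter.2 ⟨Finset.mem_univ _, hσ0mul, hfpf0⟩, ?_⟩
      rw [Finset.mem_powerset]
      exact hT0sub
    · apply Finsupp.ext
      intro i
      show Prop2Aux.Phi b σ0 T0 i = l i
      by_cases hi0 : l i = 0
      · have h1 : Prop2Aux.Phi b σ0 T0 i = 0 :=
          Prop2Aux.Phi_apply_zero b fun j hj he =>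
            ((howeq j).1 hj) (by rw [he]; exact hi0)
        rw [h1, hi0]
      · obtain ⟨k, hk⟩ := hbsurj i (hselfβ i hi0)
        subst hk
        have hkO : k ∈ Prop2Aux.owS σ0 T0 := (howeq k).2 hi0
        rw [Prop2Aux.Phi_apply_mem b hbinj hkO, hOv k hi0, hσ0app]
  -- put everything together
  rw [← Finset.sum_subset himage hzero, Finset.sum_image hinjΦ, hA_def, Finset.sum_sigma]
  have hstep : ∀ σ ∈ Finset.univ.filter
      (fun σ : Equiv.Perm (Fin N) => σ * σ = 1 ∧ ∀ i, σ i ≠ i),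
      (∑ T ∈ (Prop2Aux.pairs σ).powerset,
        ∏ i : Fin M, MvPowerSeries.coeff (R := ℂ) ((Φ ⟨σ, T⟩) i) (Prop2Aux.gg S R i))
      = ∏ p ∈ Prop2Aux.pairs σ, (S (b p) (b (σ p)) * R (b p) (b (σ p))) := by
    intro σ hσ
    have hTw : ∀ T ∈ (Prop2Aux.pairs σ).powerset,
        (∏ i : Fin M, MvPowerSeries.coeff (R := ℂ) ((Φ ⟨σ, T⟩) i) (Prop2Aux.gg S R i))
        = ∏ p ∈ Prop2Aux.pairs σ, ((S (b p) (b (σ p)) * R (b p) (b (σ p))) / 2) := by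
      intro T hT
      exact hw ⟨σ, T⟩ (by rw [hA_def, Finset.mem_sigma]; exact ⟨hσ, hT⟩)
    rw [Finset.sum_congr rfl hTw, Finset.sum_const, Finset.card_powerset, nsmul_eq_mul]
    push_cast
    rw [← Finset.prod_const (2 : ℂ), ← Finset.prod_mul_distrib]
    refine Finset.prod_congr rfl fun p _ => ?_
    ring
  rw [Finset.sum_congr rfl hstep]
  unfold hafnian
  refine Finset.sum_congr rfl fun σ hσ => Finset.prod_congr rfl fun p hp => ?_
  rw [Matrix.submatrix_apply, Matrix.hadamard_apply]
end

section
/- Let G be an M×M symmetric complex matrix and consider the multivariate formal power series E = exp((1/2) Σ_{j,k=1}^{M} G_{jk} α_j α_k) in the variables α₁,…,α_M. Then for any subset β ⊆ {1,…,M} of even cardinality |β| = 2n, the coefficient of the square-free monomial ∏_{i∈β} α_i in E equals Haf[G_{(β,β)}], the Hafnian of the 2n×2n submatrix of G on the rows and columns indexed by β. (This is the Wick-type identity by which the paper recovers the Hafnian governing Gaussian boson sampling, P_{0̄→m̄} = Haf[G^S].) -/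
open Matrix

/-- The exponential of a multivariate formal power series `f` with zero constant term:
the coefficient of a monomial `d` in `exp f` is `∑_{k=0}^{|d|} (1/k!) * coeff d (f^k)`
(the sum truncates since `coeff d (f^k) = 0` for `k > |d|` when `f` has zero constant
term). -/
noncomputable def pexp {σ : Type*} (f : MvPowerSeries σ ℂ) : MvPowerSeries σ ℂ :=
  fun d => ∑ k ∈ Finset.range (d.sum (fun _ e => e) + 1),
    ((Nat.factorial k : ℂ))⁻¹ * MvPowerSeries.coeff (R := ℂ) d (f ^ k)



lemma prod_monomial {σ ι : Type*} (s : Finset ι) (dd : ι → (σ →₀ ℕ)) (c : ι → ℂ) :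
    ∏ i ∈ s, MvPowerSeries.monomial (R := ℂ) (dd i) (c i)
      = MvPowerSeries.monomial (R := ℂ) (∑ i ∈ s, dd i) (∏ i ∈ s, c i) := by
  induction s using Finset.cons_induction with
  | empty => simp
  | cons a s ha ih =>
      rw [Finset.prod_cons, ih, MvPowerSeries.monomial_mul_monomial, Finset.sum_cons,
        Finset.prod_cons]

lemma finset_sum_single {ι : Type*} [DecidableEq ι] (β : Finset ι) :
    (∑ i ∈ β, Finsupp.single i 1) = Multiset.toFinsupp β.val := by
  rw [← Multiset.sum_map_singleton β.val, map_multiset_sum, Multiset.map_map]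
  show _ = (β.val.map _).sum
  congr 1
  funext x
  simp [Multiset.toFinsupp_singleton]

lemma multiset_sum_single {α ι : Type*} [DecidableEq ι] [Fintype α] (w : α → ι) :
    (∑ x : α, Finsupp.single (w x) 1) = Multiset.toFinsupp (Multiset.map w Finset.univ.val) := by
  rw [← Multiset.sum_map_singleton (Multiset.map w Finset.univ.val), Multiset.map_map,
    map_multiset_sum, Multiset.map_map]
  show _ = (Finset.univ.val.map _).sum
  congr 1
  funext x
  simp [Multiset.toFinsupp_singleton]

lemma key_iff {ι : Type*} [DecidableEq ι] {α : Type*} [Fintype α] (w : α → ι) (β : Finset ι) :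
    (∑ x : α, Finsupp.single (w x) 1) = (∑ i ∈ β, Finsupp.single i 1)
      ↔ Multiset.map w Finset.univ.val = β.val := by
  rw [multiset_sum_single, finset_sum_single]
  exact (AddEquiv.injective _).eq_iff

lemma map_univ_eq_iff {α ι : Type*} [DecidableEq ι] [Fintype α] (w : α → ι) (β : Finset ι) :
    Multiset.map w Finset.univ.val = β.val
      ↔ Function.Injective w ∧ Finset.image w Finset.univ = β := by
  constructor
  · intro h
    have hnd : (Multiset.map w Finset.univ.val).Nodup := h ▸ β.nodup
    have hinj : Function.Injective w := by
      intro a b hab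
      exact Multiset.inj_on_of_nodup_map hnd a (Finset.mem_univ_val _) b (Finset.mem_univ_val _) hab
    refine ⟨hinj, ?_⟩
    ext j
    simp only [Finset.mem_image, Finset.mem_univ, true_and]
    have : j ∈ β ↔ j ∈ Multiset.map w Finset.univ.val := by rw [h]; rfl
    rw [this, Multiset.mem_map]
    simp
  · rintro ⟨hinj, him⟩
    refine (Multiset.Nodup.ext (Finset.univ.nodup.map hinj) β.nodup).mpr fun j => ?_
    rw [Multiset.mem_map, ← Finset.mem_def, ← him]
    simp

/-- `w` associated to `v`. -/
def wf {M k : ℕ} (v : Fin k → Fin M × Fin M) : Fin k × Bool → Fin M :=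
  fun x => cond x.2 (v x.1).2 (v x.1).1

lemma deg_eq {M k : ℕ} (v : Fin k → Fin M × Fin M) :
    (∑ i, (Finsupp.single (v i).1 1 + Finsupp.single (v i).2 1))
      = ∑ x : Fin k × Bool, Finsupp.single (wf v x) 1 := by
  rw [Fintype.sum_prod_type]
  refine Finset.sum_congr rfl fun i _ => ?_
  rw [Fintype.sum_bool]
  simp [wf, add_comm]

lemma stepB {M n : ℕ} (G : Matrix (Fin M) (Fin M) ℂ) (β : Finset (Fin M))
    (hβ : β.card = 2 * n) (d : Fin M →₀ ℕ) (hd : d = ∑ i ∈ β, Finsupp.single i 1) (k : ℕ)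
    [DecidablePred fun v : Fin k → Fin M × Fin M =>
      d = ∑ i, (Finsupp.single (v i).1 1 + Finsupp.single (v i).2 1)] :
    ∑ v ∈ Finset.univ.filter (fun v : Fin k → Fin M × Fin M =>
        d = ∑ i, (Finsupp.single (v i).1 1 + Finsupp.single (v i).2 1)),
      ∏ i, G (v i).1 (v i).2
    = if hkn : k = n then
        ∑ e : (Fin n × Bool) ≃ {x // x ∈ β}, ∏ i : Fin n, G (e (i, false)) (e (i, true))
      else 0 := by
  subst hd
  split_ifs with hkn
  · subst hkn
    refine Finset.sum_bij' (i := fun v hv => ?_) (j := fun e _ => fun i => ((e (i, false) : Fin M), (e (i, true) : Fin M))) ?_ ?_ ?_ ?_ ?_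
    · -- construct the equiv from v
      rw [Finset.mem_filter] at hv
      have h2 := (map_univ_eq_iff (wf v) β).mp ((key_iff (wf v) β).mp ((deg_eq v).symm.trans hv.2.symm))
      refine Equiv.ofBijective (fun x => (⟨wf v x, ?_⟩ : {x // x ∈ β}))
        ((Fintype.bijective_iff_injective_and_card _).mpr ⟨fun a b hab => h2.1 (congrArg Subtype.val hab), ?_⟩)
      · rw [← h2.2]; exact Finset.mem_image_of_mem _ (Finset.mem_univ _)
      · simp only [Fintype.card_prod, Fintype.card_fin, Fintype.card_bool, Fintype.card_coe, hβ]
        omega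
    · intro a ha; exact Finset.mem_univ _
    · -- j maps into filter
      intro e _
      rw [Finset.mem_filter]
      refine ⟨Finset.mem_univ _, ?_⟩
      rw [deg_eq]
      have hw : wf (fun i => ((e (i, false) : Fin M), (e (i, true) : Fin M)))
          = fun x => (e x : Fin M) := by
        funext x
        rcases x with ⟨i, b⟩
        cases b <;> rfl
      rw [hw]
      refine ((key_iff _ β).mpr ((map_univ_eq_iff _ β).mpr ⟨?_, ?_⟩)).symm
      · exact fun a b hab => e.injective (Subtype.val_injective hab)
      · ext j
        simp only [Finset.mem_image, Finset.mem_univ, true_and]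
        constructor
        · rintro ⟨x, rfl⟩; exact (e x).2
        · intro hj; exact ⟨e.symm ⟨j, hj⟩, by simp⟩
    · -- left inverse
      intro v hv
      funext i
      simp [Equiv.ofBijective_apply, wf]
    · -- right inverse
      intro e _
      ext x
      · simp [Equiv.ofBijective_apply]
        rcases x with ⟨i, b⟩
        cases b <;> rfl
    · intro v hv
      rfl
  · -- k ≠ n : filter is empty
    rw [Finset.filter_false_of_mem, Finset.sum_empty]
    intro v _ hv
    have h2 := (key_iff (wf v) β).mp ((deg_eq v).symm.trans hv.symm)
    apply hkn
    have := congrArg Multiset.card h2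
    simp [hβ] at this
    omega


def sPerm (n : ℕ) : Equiv.Perm (Fin n × Bool) :=
  Equiv.prodCongr (Equiv.refl _) ⟨not, not, Bool.not_not, Bool.not_not⟩

lemma sPerm_apply (n : ℕ) (i : Fin n) (b : Bool) : sPerm n (i, b) = (i, !b) := rfl

def phiMap (n : ℕ) (e : (Fin n × Bool) ≃ Fin (2*n)) : Equiv.Perm (Fin (2*n)) :=
  (e.symm.trans (sPerm n)).trans e

lemma phiMap_apply (n : ℕ) (e : (Fin n × Bool) ≃ Fin (2*n)) (x : Fin (2*n)) :
    phiMap n e x = e (sPerm n (e.symm x)) := rfl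

lemma cardL (n : ℕ) (σ : Equiv.Perm (Fin (2*n))) (hσ1 : ∀ x, σ (σ x) = x) (hσ2 : ∀ x, σ x ≠ x) :
    (Finset.univ.filter fun j : Fin (2*n) => j < σ j).card = n := by
  have h1 : (Finset.univ.filter fun j : Fin (2*n) => j < σ j).card
      = (Finset.univ.filter fun j : Fin (2*n) => σ j < j).card := by
    refine Finset.card_nbij' (fun j => σ j) (fun j => σ j) ?_ ?_ ?_ ?_
    · intro j hj
      simp only [Finset.coe_filter, Finset.mem_univ, true_and, Set.mem_setOf_eq] at hj ⊢
      rw [hσ1]; exact hj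
    · intro j hj
      simp only [Finset.coe_filter, Finset.mem_univ, true_and, Set.mem_setOf_eq] at hj ⊢
      rw [hσ1]; exact hj
    · intro j _; exact hσ1 j
    · intro j _; exact hσ1 j
  have h3 : (Finset.univ.filter fun j : Fin (2*n) => ¬ (j < σ j))
      = Finset.univ.filter fun j : Fin (2*n) => σ j < j := by
    apply Finset.filter_congr
    intro j _
    exact ⟨fun h => lt_of_le_of_ne (not_lt.mp h) (hσ2 j), fun h => not_lt.mpr h.le⟩
  have h2 := Finset.card_filter_add_card_filter_not
    (s := (Finset.univ : Finset (Fin (2*n)))) (fun j => j < σ j)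
  rw [h3] at h2
  rw [Finset.card_univ, Fintype.card_fin] at h2
  omega

lemma fiber_sum (n : ℕ) (A : Matrix (Fin (2*n)) (Fin (2*n)) ℂ) (hsym : ∀ a b, A a b = A b a)
    (σ : Equiv.Perm (Fin (2*n))) (hσ1 : ∀ x, σ (σ x) = x) (hσ2 : ∀ x, σ x ≠ x) :
    ∑ e ∈ Finset.univ.filter (fun e : (Fin n × Bool) ≃ Fin (2*n) => phiMap n e = σ),
      ∏ i : Fin n, A (e (i, false)) (e (i, true))
    = ((n.factorial * 2^n : ℕ) : ℂ) * ∏ j ∈ Finset.univ.filter (fun j => j < σ j), A j (σ j) := by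
  have hL : (Finset.univ.filter fun j : Fin (2*n) => j < σ j).card = n := cardL n σ hσ1 hσ2
  set L := Finset.univ.filter (fun j : Fin (2*n) => j < σ j) with hLdef
  have memL : ∀ j, j ∈ L ↔ j < σ j := fun j => by simp [hLdef]
  have hLnotL : ∀ j, j ∈ L → σ j ∉ L := by
    intro j hj hsj
    rw [memL] at hj hsj
    rw [hσ1] at hsj
    exact absurd hj (not_lt.mpr hsj.le)
  have hnotL : ∀ j, j ∉ L → σ j ∈ L := by
    intro j hj
    rw [memL] at hj ⊢
    rw [hσ1]
    exact lt_of_le_of_ne (not_lt.mp hj) (hσ2 j)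
  -- the enumeration of L
  set m : Fin n → Fin (2*n) := fun i => ((L.orderIsoOfFin hL) i : Fin (2*n)) with hmdef
  have hm_mem : ∀ i, m i ∈ L := fun i => ((L.orderIsoOfFin hL) i).2
  have hm_inj : Function.Injective m := fun a b h =>
    (L.orderIsoOfFin hL).injective (Subtype.ext h)
  -- facts about fiber elements
  have hkey : ∀ e ∈ Finset.univ.filter (fun e : (Fin n × Bool) ≃ Fin (2*n) => phiMap n e = σ),
      ∀ (i : Fin n) (b : Bool), e (i, !b) = σ (e (i, b)) := by
    intro e he i b
    rw [Finset.mem_filter] at he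
    rw [← he.2]
    rw [phiMap_apply, Equiv.symm_apply_apply, sPerm_apply]
  -- `low e i` : the lower element of pair i
  have hlow_mem : ∀ e ∈ Finset.univ.filter (fun e : (Fin n × Bool) ≃ Fin (2*n) => phiMap n e = σ),
      ∀ i : Fin n, (if e (i, false) ∈ L then e (i, false) else e (i, true)) ∈ L := by
    intro e he i
    split_ifs with h
    · exact h
    · have := hkey e he i false
      simp only [Bool.not_false] at this
      rw [this]
      exact hnotL _ h
  -- value of the product on the fiber
  have hprod : ∀ e ∈ Finset.univ.filter (fun e : (Fin n × Bool) ≃ Fin (2*n) => phiMap n e = σ),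
      ∏ i : Fin n, A (e (i, false)) (e (i, true)) = ∏ j ∈ L, A j (σ j) := by
    intro e he
    have hk : ∀ (i : Fin n) (b : Bool), e (i, !b) = σ (e (i, b)) := hkey e he
    refine Finset.prod_nbij' (fun i => if e (i, false) ∈ L then e (i, false) else e (i, true))
      (fun j => (e.symm j).1) (fun i _ => hlow_mem e he i) (fun j _ => Finset.mem_univ _)
      ?_ ?_ ?_
    · intro i _
      split_ifs <;> simp
    · intro j hj
      rcases hx : e.symm j with ⟨i, b⟩
      have hej : e (i, b) = j := by rw [← hx, Equiv.apply_symm_apply]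
      dsimp only
      cases b
      · rw [if_pos (by rw [hej]; exact hj), hej]
      · have h1 := hk i false
        simp only [Bool.not_false] at h1
        have hjf : e (i, false) = σ j := by rw [← hej, ← hσ1 (e (i, false)), h1]
        rw [if_neg (by rw [hjf]; exact hLnotL j hj), hej]
    · intro i _
      by_cases h : e (i, false) ∈ L
      · have h1 := hk i false
        simp only [Bool.not_false] at h1
        rw [if_pos h, ← h1]
      · have h1 := hk i false
        simp only [Bool.not_false] at h1
        have h2 : σ (e (i, true)) = e (i, false) := by rw [h1, hσ1]
        rw [if_neg h, ← h2, hsym]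
  -- the inverse index map on the lower element
  have hlow_inv : ∀ (e : (Fin n × Bool) ≃ Fin (2*n)) (i : Fin n),
      (e.symm (if e (i, false) ∈ L then e (i, false) else e (i, true))).1 = i := by
    intro e i
    split_ifs <;> simp
  -- forward bijection (fiber element to permutation)
  have hbij1 : ∀ (e : (Fin n × Bool) ≃ Fin (2*n))
      (he : e ∈ Finset.univ.filter (fun e : (Fin n × Bool) ≃ Fin (2*n) => phiMap n e = σ)),
      Function.Bijective (fun i : Fin n => (L.orderIsoOfFin hL).symm
        ⟨if e (i, false) ∈ L then e (i, false) else e (i, true), hlow_mem e he i⟩) := by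
    intro e he
    refine Finite.injective_iff_bijective.mp ?_
    intro a b h
    have h2 := congrArg (fun z => ((L.orderIsoOfFin hL) z : Fin (2*n))) h
    simp only [OrderIso.apply_symm_apply] at h2
    have := hlow_inv e a
    rw [h2, hlow_inv e b] at this
    exact this.symm
  -- backward bijection
  have hbij2 : ∀ pe : Equiv.Perm (Fin n) × (Fin n → Bool),
      Function.Bijective (fun x : Fin n × Bool =>
        if x.2 = pe.2 x.1 then m (pe.1 x.1) else σ (m (pe.1 x.1))) := by
    intro pe
    refine (Fintype.bijective_iff_injective_and_card _).mpr ⟨?_, by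
      simp only [Fintype.card_prod, Fintype.card_fin, Fintype.card_bool]; omega⟩
    rintro ⟨x1, x2⟩ ⟨y1, y2⟩ h
    dsimp only at h
    by_cases hx2 : x2 = pe.2 x1 <;> by_cases hy2 : y2 = pe.2 y1
    · rw [if_pos hx2, if_pos hy2] at h
      have h1 : x1 = y1 := pe.1.injective (hm_inj h)
      subst h1
      exact Prod.ext rfl (hx2.trans hy2.symm)
    · rw [if_pos hx2, if_neg hy2] at h
      exact absurd (h ▸ hm_mem (pe.1 x1)) (hLnotL _ (hm_mem (pe.1 y1)))
    · rw [if_neg hx2, if_pos hy2] at h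
      exact absurd (h.symm ▸ hm_mem (pe.1 y1)) (hLnotL _ (hm_mem (pe.1 x1)))
    · rw [if_neg hx2, if_neg hy2] at h
      have h1 : x1 = y1 := pe.1.injective (hm_inj (σ.injective h))
      subst h1
      have : x2 = y2 := by
        have hb : ∀ a b c : Bool, ¬(a = c) → ¬(b = c) → a = b := by decide
        exact hb x2 y2 (pe.2 x1) hx2 hy2
      exact Prod.ext rfl this
  -- cardinality of the fiber
  have hcard : (Finset.univ.filter (fun e : (Fin n × Bool) ≃ Fin (2*n) => phiMap n e = σ)).card
      = n.factorial * 2^n := by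
    have key : (Finset.univ.filter (fun e : (Fin n × Bool) ≃ Fin (2*n) => phiMap n e = σ)).card
        = (Finset.univ : Finset (Equiv.Perm (Fin n) × (Fin n → Bool))).card := by
      refine Finset.card_bij'
        (i := fun e he =>
          (Equiv.ofBijective _ (hbij1 e he), fun i => decide (e (i, false) ∉ L)))
        (j := fun pe _ => Equiv.ofBijective _ (hbij2 pe))
        (fun _ _ => Finset.mem_univ _) ?_ ?_ ?_
      · -- maps into the fiber
        intro pe _
        rw [Finset.mem_filter]
        refine ⟨Finset.mem_univ _, ?_⟩
        have hg : ∀ x : Fin n × Bool,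
            (Equiv.ofBijective _ (hbij2 pe)) (sPerm n x) = σ ((Equiv.ofBijective _ (hbij2 pe)) x) := by
          rintro ⟨i, b⟩
          rw [sPerm_apply]
          have hv : ∀ (b : Bool), (Equiv.ofBijective _ (hbij2 pe)) (i, b)
              = if b = pe.2 i then m (pe.1 i) else σ (m (pe.1 i)) := fun b => rfl
          rw [hv, hv]
          cases hc : pe.2 i <;> cases b <;>
            first
            | rw [if_neg (by decide), if_pos (by decide)]
            | rw [if_pos (by decide), if_neg (by decide), hσ1]
        ext x
        rw [phiMap_apply, hg, Equiv.apply_symm_apply]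
      · -- left inverse
        intro e he
        have hk : ∀ (i : Fin n) (b : Bool), e (i, !b) = σ (e (i, b)) := hkey e he
        have hmu : ∀ z : {x // x ∈ L}, m ((L.orderIsoOfFin hL).symm z) = (z : Fin (2*n)) := by
          intro z
          show ((L.orderIsoOfFin hL) ((L.orderIsoOfFin hL).symm z) : Fin (2*n)) = _
          rw [OrderIso.apply_symm_apply]
        refine Equiv.ext fun x => ?_
        obtain ⟨i, b⟩ := x
        show (if b = decide (e (i, false) ∉ L)
            then m ((L.orderIsoOfFin hL).symm ⟨_, hlow_mem e he i⟩)
            else σ (m ((L.orderIsoOfFin hL).symm ⟨_, hlow_mem e he i⟩))) = e (i, b)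
        rw [hmu]
        by_cases h : e (i, false) ∈ L
        · have hε : decide (e (i, false) ∉ L) = false := by simp [h]
          rw [hε]
          cases b
          · rw [if_pos rfl]
            show (if e (i, false) ∈ L then e (i, false) else e (i, true)) = e (i, false)
            exact if_pos h
          · rw [if_neg (by decide)]
            show σ (if e (i, false) ∈ L then e (i, false) else e (i, true)) = e (i, true)
            rw [if_pos h]
            have h1 := hk i false
            simp only [Bool.not_false] at h1
            exact h1.symm
        · have hε : decide (e (i, false) ∉ L) = true := by simp [h]
          rw [hε]
          cases b
          · rw [if_neg (by decide)]
            show σ (if e (i, false) ∈ L then e (i, false) else e (i, true)) = e (i, false)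
            rw [if_neg h]
            have h1 := hk i false
            simp only [Bool.not_false] at h1
            rw [h1, hσ1]
          · rw [if_pos rfl]
            show (if e (i, false) ∈ L then e (i, false) else e (i, true)) = e (i, true)
            exact if_neg h
      · -- right inverse
        rintro ⟨π, ε⟩ _
        have hvf : ∀ (i : Fin n) (b : Bool), (Equiv.ofBijective _ (hbij2 (π, ε))) (i, b)
            = if b = ε i then m (π i) else σ (m (π i)) := fun i b => rfl
        have hlow' : ∀ i : Fin n,
            (if (Equiv.ofBijective _ (hbij2 (π, ε))) (i, false) ∈ L
              then (Equiv.ofBijective _ (hbij2 (π, ε))) (i, false)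
              else (Equiv.ofBijective _ (hbij2 (π, ε))) (i, true)) = m (π i) := by
          intro i
          have hXf := hvf i false
          have hXt := hvf i true
          cases hc : ε i
          · rw [hc, if_pos rfl] at hXf
            rw [hXf, if_pos (hm_mem (π i))]
          · rw [hc, if_neg (Bool.false_ne_true)] at hXf
            rw [hc, if_pos rfl] at hXt
            rw [hXf, hXt, if_neg (hLnotL _ (hm_mem (π i)))]
        refine Prod.ext ?_ ?_
        · refine Equiv.ext fun i => ?_
          simp only [Equiv.ofBijective_apply]
          rw [OrderIso.symm_apply_eq]
          exact Subtype.ext (hlow' i)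
        · funext i
          show decide ((Equiv.ofBijective _ (hbij2 (π, ε))) (i, false) ∉ L) = ε i
          have hX : (Equiv.ofBijective _ (hbij2 (π, ε))) (i, false)
              = if false = ε i then m (π i) else σ (m (π i)) := hvf i false
          cases hc : ε i
          · rw [hc, if_pos rfl] at hX
            exact decide_eq_false (not_not_intro (hX ▸ hm_mem (π i)))
          · rw [hc, if_neg (Bool.false_ne_true)] at hX
            exact decide_eq_true (hX ▸ hLnotL _ (hm_mem (π i)))
    rw [key, Finset.card_univ, Fintype.card_prod, Fintype.card_perm, Fintype.card_fin,
      Fintype.card_fun, Fintype.card_bool, Fintype.card_fin]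
  rw [Finset.sum_congr rfl hprod, Finset.sum_const, hcard, nsmul_eq_mul]

lemma sPerm_sPerm (n : ℕ) (y : Fin n × Bool) : sPerm n (sPerm n y) = y := by
  obtain ⟨i, b⟩ := y
  rw [sPerm_apply, sPerm_apply, Bool.not_not]

lemma sPerm_ne (n : ℕ) (y : Fin n × Bool) : sPerm n y ≠ y := by
  obtain ⟨i, b⟩ := y
  rw [sPerm_apply]
  intro h
  exact (Bool.not_ne_self b) (congrArg Prod.snd h)

lemma core (n : ℕ) (A : Matrix (Fin (2*n)) (Fin (2*n)) ℂ) (hA : Aᵀ = A) :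
    ∑ e : (Fin n × Bool) ≃ Fin (2*n), ∏ i : Fin n, A (e (i, false)) (e (i, true))
      = ((n.factorial * 2^n : ℕ) : ℂ) * hafnian A := by
  have hsym : ∀ a b, A a b = A b a := fun a b => by
    conv_lhs => rw [← hA]
    exact Matrix.transpose_apply A a b
  have hmaps : ∀ e : (Fin n × Bool) ≃ Fin (2*n), phiMap n e ∈ Finset.univ.filter
      (fun σ : Equiv.Perm (Fin (2*n)) => σ * σ = 1 ∧ ∀ i, σ i ≠ i) := by
    intro e
    rw [Finset.mem_filter]
    refine ⟨Finset.mem_univ _, ?_, ?_⟩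
    · ext x
      rw [Equiv.Perm.mul_apply, phiMap_apply, phiMap_apply, Equiv.symm_apply_apply,
        sPerm_sPerm, Equiv.apply_symm_apply]
      rfl
    · intro x hx
      rw [phiMap_apply] at hx
      have h1 : e (sPerm n (e.symm x)) = e (e.symm x) := by rw [hx, Equiv.apply_symm_apply]
      exact sPerm_ne n (e.symm x) (e.injective h1)
  rw [← Finset.sum_fiberwise_of_maps_to (fun e (_ : e ∈ Finset.univ) => hmaps e)
    (fun e => ∏ i : Fin n, A (e (i, false)) (e (i, true)))]
  simp only [hafnian]
  rw [Finset.mul_sum]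
  refine Finset.sum_congr (by congr!) ?_
  intro σ hσ
  rw [Finset.mem_filter] at hσ
  have hσ1 : ∀ x, σ (σ x) = x := fun x => by
    rw [← Equiv.Perm.mul_apply, hσ.2.1]; rfl
  rw [fiber_sum n A hsym σ hσ1 hσ.2.2]


/-- **Wick-type identity.** For a symmetric `M × M` complex matrix `G` and the formal
power series `E = exp((1/2) ∑_{j,k} G_{jk} α_j α_k)`, the coefficient of the square-free
monomial `∏_{i ∈ β} α_i`, for any `β` of even cardinality `2n`, equals the Hafnian of the
`2n × 2n` submatrix of `G` on the rows and columns indexed by `β`. -/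
theorem gaussian_coeff_hafnian (M n : ℕ) (G : Matrix (Fin M) (Fin M) ℂ)
    (hG : Gᵀ = G) (β : Finset (Fin M)) (hβ : β.card = 2 * n) :
    MvPowerSeries.coeff (R := ℂ) (∑ i ∈ β, Finsupp.single i 1)
      (pexp (MvPowerSeries.C (σ := Fin M) (R := ℂ) (1 / 2) *
        ∑ j : Fin M, ∑ k : Fin M,
          MvPowerSeries.C (σ := Fin M) (R := ℂ) (G j k) * MvPowerSeries.X j * MvPowerSeries.X k)) =
    hafnian (G.submatrix (β.orderEmbOfFin hβ) (β.orderEmbOfFin hβ)) := by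
  classical
  have hterm : ∀ (a : ℂ) (j k' : Fin M),
      MvPowerSeries.C (σ := Fin M) (R := ℂ) a * MvPowerSeries.X j * MvPowerSeries.X k'
        = MvPowerSeries.monomial (R := ℂ) (Finsupp.single j 1 + Finsupp.single k' 1) a := by
    intro a j k'
    rw [show MvPowerSeries.C (σ := Fin M) (R := ℂ) a = MvPowerSeries.monomial (R := ℂ) 0 a from rfl,
      show (MvPowerSeries.X j : MvPowerSeries (Fin M) ℂ)
        = MvPowerSeries.monomial (R := ℂ) (Finsupp.single j 1) 1 from rfl,
      show (MvPowerSeries.X k' : MvPowerSeries (Fin M) ℂ)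
        = MvPowerSeries.monomial (R := ℂ) (Finsupp.single k' 1) 1 from rfl,
      MvPowerSeries.monomial_mul_monomial, MvPowerSeries.monomial_mul_monomial,
      mul_one, mul_one, zero_add]
  have hS : (∑ j : Fin M, ∑ k : Fin M,
        MvPowerSeries.C (σ := Fin M) (R := ℂ) (G j k) * MvPowerSeries.X j * MvPowerSeries.X k)
      = ∑ p : Fin M × Fin M,
          MvPowerSeries.monomial (R := ℂ) (Finsupp.single p.1 1 + Finsupp.single p.2 1) (G p.1 p.2) := by
    rw [Fintype.sum_prod_type]
    exact Finset.sum_congr rfl fun j _ => Finset.sum_congr rfl fun k _ => hterm (G j k) j k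
  set F := MvPowerSeries.C (σ := Fin M) (R := ℂ) (1 / 2) *
      ∑ j : Fin M, ∑ k : Fin M,
        MvPowerSeries.C (σ := Fin M) (R := ℂ) (G j k) * MvPowerSeries.X j * MvPowerSeries.X k with hF
  set d : Fin M →₀ ℕ := ∑ i ∈ β, Finsupp.single i 1 with hd
  have hdsum : d.sum (fun _ e => e) = 2 * n := by
    rw [hd, ← Finsupp.sum_finset_sum_index (fun a => rfl) (fun a b c => rfl),
      Finset.sum_congr rfl (fun i _ => Finsupp.sum_single_index rfl),
      Finset.sum_const, smul_eq_mul, mul_one, hβ]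
  have hcoeff : ∀ k : ℕ, MvPowerSeries.coeff (R := ℂ) d (F ^ k)
      = (1/2 : ℂ)^k * ∑ v ∈ Finset.univ.filter (fun v : Fin k → Fin M × Fin M =>
          d = ∑ i, (Finsupp.single (v i).1 1 + Finsupp.single (v i).2 1)),
        ∏ i, G (v i).1 (v i).2 := by
    intro k
    rw [hF, hS, mul_pow, ← map_pow, MvPowerSeries.coeff_C_mul]
    congr 1
    rw [← Fin.prod_const k, Finset.prod_univ_sum, map_sum,
      Finset.sum_congr rfl (fun v _ => by
        rw [prod_monomial, MvPowerSeries.coeff_monomial])]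
    rw [Fintype.piFinset_univ]
    exact (Finset.sum_filter _ _).symm
  have hpexp : pexp F d = ∑ k ∈ Finset.range (2 * n + 1),
      ((k.factorial : ℂ))⁻¹ * MvPowerSeries.coeff (R := ℂ) d (F ^ k) := by
    unfold pexp
    rw [hdsum]
  rw [MvPowerSeries.coeff_apply, hpexp,
    Finset.sum_eq_single_of_mem n (by rw [Finset.mem_range]; omega)
      (fun k _ hkn => by rw [hcoeff k, stepB G β hβ d hd k, dif_neg hkn, mul_zero, mul_zero]),
    hcoeff n, stepB G β hβ d hd n, dif_pos rfl]
  -- reindex along the order isomorphism with `Fin (2*n)`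
  have hembs : ∀ z : {x // x ∈ β},
      β.orderEmbOfFin hβ ((β.orderIsoOfFin hβ).symm z) = (z : Fin M) := by
    intro z
    rw [← Finset.coe_orderIsoOfFin_apply, OrderIso.apply_symm_apply]
  have hre : ∑ e : (Fin n × Bool) ≃ {x // x ∈ β}, ∏ i : Fin n, G (e (i, false)) (e (i, true))
      = ∑ e : (Fin n × Bool) ≃ Fin (2*n), ∏ i : Fin n,
          (G.submatrix (β.orderEmbOfFin hβ) (β.orderEmbOfFin hβ)) (e (i, false)) (e (i, true)) := by
    refine Fintype.sum_equiv
      (Equiv.equivCongr (Equiv.refl _) (β.orderIsoOfFin hβ).toEquiv.symm) _ _ ?_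
    intro e
    refine Finset.prod_congr rfl fun i _ => ?_
    rw [Matrix.submatrix_apply,
      show ((Equiv.equivCongr (Equiv.refl _) (β.orderIsoOfFin hβ).toEquiv.symm) e) (i, false)
        = (β.orderIsoOfFin hβ).symm (e (i, false)) from rfl,
      show ((Equiv.equivCongr (Equiv.refl _) (β.orderIsoOfFin hβ).toEquiv.symm) e) (i, true)
        = (β.orderIsoOfFin hβ).symm (e (i, true)) from rfl,
      hembs, hembs]
  have hAsym : (G.submatrix (β.orderEmbOfFin hβ) (β.orderEmbOfFin hβ))ᵀ
      = G.submatrix (β.orderEmbOfFin hβ) (β.orderEmbOfFin hβ) := by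
    rw [Matrix.transpose_submatrix, hG]
  rw [hre, core n _ hAsym]
  have h2 : (1/2 : ℂ)^n * (2:ℂ)^n = 1 := by rw [← mul_pow]; norm_num
  have hn : (n.factorial : ℂ) ≠ 0 := Nat.cast_ne_zero.mpr n.factorial_ne_zero
  push_cast
  field_simp
  rw [h2, one_mul]
end

section
/- Let U be an N×N complex matrix and, for variables x₁,…,x_N, define the N×N matrix of polynomials C(x) by C(x)_{ij} = Σ_{r=1}^{N} x_r · conj(U_{ri}) · U_{rj}. Then the coefficient of the monomial x₁ x₂ ⋯ x_N in the polynomial Perm(C(x)) equals |Perm(U)|². (This is the generating-function form of the paper's recovery of the squared permanent in the linear-optics limit of unified boson sampling.) -/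
open Matrix

private lemma prod_X_aux {N : ℕ} (g : Fin N → Fin N) (s : Finset (Fin N)) :
    (∏ i ∈ s, (MvPolynomial.X (g i) : MvPolynomial (Fin N) ℂ)) =
      MvPolynomial.monomial (∑ i ∈ s, Finsupp.single (g i) 1) 1 := by
  classical
  induction s using Finset.induction with
  | empty => simp [MvPolynomial.monomial_zero']
  | insert _ _ ha ih =>
      rw [Finset.prod_insert ha, Finset.sum_insert ha, ih, MvPolynomial.X,
        MvPolynomial.monomial_mul, mul_one]

private lemma sum_single_eq_iff {N : ℕ} (g : Fin N → Fin N) :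
    (∑ i : Fin N, Finsupp.single (g i) (1 : ℕ)) = (∑ i : Fin N, Finsupp.single i 1) ↔
      Function.Bijective g := by
  classical
  constructor
  · intro h
    rw [← Finite.injective_iff_bijective]
    intro a b hab
    by_contra hne
    have h2 := DFunLike.congr_fun h (g a)
    rw [Finsupp.finset_sum_apply, Finsupp.finset_sum_apply] at h2
    simp only [Finsupp.single_apply] at h2
    have hR : (∑ i : Fin N, if i = g a then (1 : ℕ) else 0) = 1 := by
      simp
    have hL : 2 ≤ ∑ i : Fin N, if g i = g a then (1 : ℕ) else 0 := by
      have hsub : ({a, b} : Finset (Fin N)) ⊆ Finset.univ := Finset.subset_univ _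
      calc (2 : ℕ) = ∑ i ∈ ({a, b} : Finset (Fin N)), if g i = g a then (1 : ℕ) else 0 := by
            rw [Finset.sum_pair hne]
            simp [hab]
        _ ≤ _ := Finset.sum_le_sum_of_subset hsub
    omega
  · intro h
    exact Equiv.sum_comp (Equiv.ofBijective g h) (fun i => Finsupp.single i 1)

private lemma sum_bij_perm {N : ℕ} (c : (Fin N → Fin N) → ℂ) :
    (∑ g : Fin N → Fin N, if Function.Bijective g then c g else 0)
      = ∑ τ : Equiv.Perm (Fin N), c ⇑τ := by
  classical
  rw [← Finset.sum_filter]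
  refine (Finset.sum_bij (fun (τ : Equiv.Perm (Fin N)) _ => (⇑τ : Fin N → Fin N))
    ?_ ?_ ?_ ?_).symm
  · intro τ _
    exact Finset.mem_filter.2 ⟨Finset.mem_univ _, τ.bijective⟩
  · intro τ₁ _ τ₂ _ h
    exact Equiv.coe_fn_injective h
  · intro g hg
    simp only [Finset.mem_filter] at hg
    exact ⟨Equiv.ofBijective g hg.2, Finset.mem_univ _, rfl⟩
  · intro τ _
    rfl

/-- **Generating-function form of the squared permanent.** For an `N × N` complex matrix
`U`, let `C(x)` be the matrix of polynomials `C(x)_{ij} = ∑_r x_r conj(U_{ri}) U_{rj}`.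
Then the coefficient of the monomial `x₁ x₂ ⋯ x_N` in the polynomial
`Perm(C(x)) = ∑_{σ ∈ S_N} ∏_i C(x)_{i,σ(i)}` equals
`|Perm(U)|² = Perm(U) · conj(Perm(U))`. -/
theorem coeff_permanent_eq_permanent_sq (N : ℕ) (U : Matrix (Fin N) (Fin N) ℂ) :
    MvPolynomial.coeff (∑ i : Fin N, Finsupp.single i 1)
      (∑ σ : Equiv.Perm (Fin N), ∏ i : Fin N,
        (∑ r : Fin N, MvPolynomial.X r *
          MvPolynomial.C ((starRingEnd ℂ) (U r i)) * MvPolynomial.C (U r (σ i)))) =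
    (∑ σ : Equiv.Perm (Fin N), ∏ i : Fin N, U i (σ i)) *
      (starRingEnd ℂ) (∑ σ : Equiv.Perm (Fin N), ∏ i : Fin N, U i (σ i)) := by
  classical
  have expand : ∀ σ : Equiv.Perm (Fin N),
      (∏ i : Fin N, ∑ r : Fin N, MvPolynomial.X r *
          MvPolynomial.C ((starRingEnd ℂ) (U r i)) * MvPolynomial.C (U r (σ i))) =
      ∑ g : Fin N → Fin N, MvPolynomial.monomial (∑ i : Fin N, Finsupp.single (g i) 1)
        (∏ i : Fin N, (starRingEnd ℂ) (U (g i) i) * U (g i) (σ i)) := by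
    intro σ
    rw [Finset.prod_univ_sum]
    rw [show (Fintype.piFinset fun _ : Fin N => (Finset.univ : Finset (Fin N)))
        = (Finset.univ : Finset (Fin N → Fin N)) from Fintype.piFinset_univ]
    refine Finset.sum_congr rfl fun g _ => ?_
    have hfac : ∀ i : Fin N,
        MvPolynomial.X (g i) * MvPolynomial.C ((starRingEnd ℂ) (U (g i) i)) *
          MvPolynomial.C (U (g i) (σ i)) =
        MvPolynomial.C ((starRingEnd ℂ) (U (g i) i) * U (g i) (σ i)) *
          MvPolynomial.X (g i) := by
      intro i
      rw [MvPolynomial.C_mul]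
      ring
    rw [Finset.prod_congr rfl (fun i _ => hfac i), Finset.prod_mul_distrib, ← map_prod,
      prod_X_aux, MvPolynomial.C_mul_monomial, mul_one]
  rw [Finset.sum_congr rfl (fun σ _ => expand σ), MvPolynomial.coeff_sum]
  simp only [MvPolynomial.coeff_sum, MvPolynomial.coeff_monomial]
  have step : ∀ σ : Equiv.Perm (Fin N),
      (∑ g : Fin N → Fin N,
        if (∑ i : Fin N, Finsupp.single (g i) 1) = (∑ i : Fin N, Finsupp.single i 1) then
          (∏ i : Fin N, (starRingEnd ℂ) (U (g i) i) * U (g i) (σ i)) else 0)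
      = ∑ τ : Equiv.Perm (Fin N), ∏ i : Fin N, (starRingEnd ℂ) (U (τ i) i) * U (τ i) (σ i) := by
    intro σ
    rw [← sum_bij_perm (fun g => ∏ i : Fin N, (starRingEnd ℂ) (U (g i) i) * U (g i) (σ i))]
    exact Finset.sum_congr rfl fun g _ => if_congr (sum_single_eq_iff g) rfl rfl
  rw [Finset.sum_congr rfl (fun σ _ => step σ)]
  -- now pure algebra over ℂ
  have L1 : ∀ σ τ : Equiv.Perm (Fin N),
      (∏ i : Fin N, (starRingEnd ℂ) (U (τ i) i) * U (τ i) (σ i))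
        = (∏ j : Fin N, U j (σ (τ⁻¹ j))) * ∏ j : Fin N, (starRingEnd ℂ) (U j (τ⁻¹ j)) := by
    intro σ τ
    rw [Finset.prod_mul_distrib, mul_comm]
    refine congrArg₂ (· * ·) ?_ ?_
    · rw [← Equiv.prod_comp τ (fun j => U j (σ (τ⁻¹ j)))]
      simp
    · rw [← Equiv.prod_comp τ (fun j => (starRingEnd ℂ) (U j (τ⁻¹ j)))]
      simp
  have L2 : ∀ σ : Equiv.Perm (Fin N),
      (∑ τ : Equiv.Perm (Fin N), ∏ i : Fin N, (starRingEnd ℂ) (U (τ i) i) * U (τ i) (σ i))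
        = ∑ τ : Equiv.Perm (Fin N),
            (∏ j : Fin N, U j (σ (τ j))) * ∏ j : Fin N, (starRingEnd ℂ) (U j (τ j)) := by
    intro σ
    rw [← Equiv.sum_comp (Equiv.inv (Equiv.Perm (Fin N)))
      (fun τ => (∏ j : Fin N, U j (σ (τ j))) * ∏ j : Fin N, (starRingEnd ℂ) (U j (τ j)))]
    exact Finset.sum_congr rfl fun τ _ => L1 σ τ
  rw [Finset.sum_congr rfl fun σ _ => L2 σ, Finset.sum_comm]
  have L3 : ∀ τ : Equiv.Perm (Fin N),
      (∑ σ : Equiv.Perm (Fin N), ∏ j : Fin N, U j (σ (τ j)))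
        = ∑ σ : Equiv.Perm (Fin N), ∏ j : Fin N, U j (σ j) := fun τ =>
    Equiv.sum_comp (Equiv.mulRight τ) (fun σ : Equiv.Perm (Fin N) => ∏ j : Fin N, U j (σ j))
  calc ∑ τ : Equiv.Perm (Fin N), ∑ σ : Equiv.Perm (Fin N),
        (∏ j : Fin N, U j (σ (τ j))) * ∏ j : Fin N, (starRingEnd ℂ) (U j (τ j))
      = ∑ τ : Equiv.Perm (Fin N),
          (∑ σ : Equiv.Perm (Fin N), ∏ j : Fin N, U j (σ j)) *
            ∏ j : Fin N, (starRingEnd ℂ) (U j (τ j)) := by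
        refine Finset.sum_congr rfl fun τ _ => ?_
        rw [← Finset.sum_mul, L3 τ]
    _ = (∑ σ : Equiv.Perm (Fin N), ∏ i : Fin N, U i (σ i)) *
          (starRingEnd ℂ) (∑ σ : Equiv.Perm (Fin N), ∏ i : Fin N, U i (σ i)) := by
        rw [← Finset.mul_sum, map_sum]
        simp [map_prod]
end
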